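/- Let K ⊂ ℂ be a bounded measurable set, let r > 0, let B = B(0,r) be the open disc of radius r centered at the origin, and let a < 3 be a real number. Then the function (x,y) ↦ 1_B(x) · 1_{ℂ∖B}(y) · |x−y|^{−a} is Lebesgue-integrable on K × K; equivalently, ∫_K ∫_K 1_B(x) 1_{ℂ∖B}(y) |x−y|^{−a} d²x d²y < ∞. -/

import Mathlib

open MeasureTheory Set Metric Module
open scoped ENNReal

/-!
Substituting `y = x + z`, the integral is bounded by `∫ ‖z‖⁻ᵃ μ {x ∈ B | x + z ∉ B} dz` over a
bounded set of `z`. A point of `B = B(0, r)` that leaves `B` when translated by `z` lies in the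
shell `B(0, r) \ B(0, r - ‖z‖)`, whose measure is `O(‖z‖)`. So everything reduces to the local
integrability of `‖z‖ ^ (1 - a)`, which in dimension `d` (here `d = 2`) holds exactly when
`a < d + 1`.
-/

lemma Real.rpow_mul_self_le_rpow_add_one {x : ℝ} (hx : 0 ≤ x) (y : ℝ) :
    x ^ y * x ≤ x ^ (y + 1) := by
  rcases hx.eq_or_lt with rfl | hx
  · rw [mul_zero]
    positivity
  · rw [Real.rpow_add_one hx.ne']

lemma lintegral_prod_eq_lintegral_lintegral_add {G : Type*} [MeasurableSpace G] [AddGroup G]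
    [MeasurableAdd₂ G] (μ : Measure G) [SFinite μ] [μ.IsAddLeftInvariant] {f : G × G → ℝ≥0∞}
    (hf : Measurable f) :
    ∫⁻ p, f p ∂(μ.prod μ) = ∫⁻ z, ∫⁻ x, f (x, x + z) ∂μ ∂μ := by
  rw [← (measurePreserving_prod_add_swap μ μ).lintegral_comp hf,
    lintegral_prod (fun q : G × G => f (q.2, q.2 + q.1)) (hf.comp (by fun_prop)).aemeasurable]

section AddHaar

variable {E : Type*} [NormedAddCommGroup E] [NormedSpace ℝ E] [FiniteDimensional ℝ E]
  [MeasurableSpace E] [BorelSpace E] (μ : Measure E) [μ.IsAddHaarMeasure] [Nontrivial E]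

lemma addHaar_ball_diff_ball (c : E) {r s : ℝ} (hs : 0 ≤ s) (hsr : s ≤ r) :
    μ (ball c r \ ball c s) =
      ENNReal.ofReal (r ^ finrank ℝ E - s ^ finrank ℝ E) * μ (ball 0 1) := by
  rw [measure_sdiff (ball_subset_ball hsr) measurableSet_ball.nullMeasurableSet
      measure_ball_lt_top.ne, Measure.addHaar_ball μ c (hs.trans hsr), Measure.addHaar_ball μ c hs,
    ← ENNReal.sub_mul fun _ _ => measure_ball_lt_top.ne, ENNReal.ofReal_sub _ (by positivity)]

lemma addHaar_setOf_mem_ball_add_notMem_ball_le (c z : E) {r : ℝ} (hr : 0 ≤ r) :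
    μ {x | x ∈ ball c r ∧ x + z ∉ ball c r} ≤
      ENNReal.ofReal (finrank ℝ E * r ^ (finrank ℝ E - 1) * ‖z‖) * μ (ball 0 1) := by
  -- clamped at `0` so that `addHaar_ball_diff_ball` also applies when `‖z‖ > r`
  set s := max (r - ‖z‖) 0
  have hs : 0 ≤ s := le_max_right _ _
  have hsr : s ≤ r := max_le (by linarith [norm_nonneg z]) hr
  have h_shell : {x | x ∈ ball c r ∧ x + z ∉ ball c r} ⊆ ball c r \ ball c s := by
    rintro x ⟨hx, hxz⟩
    refine ⟨hx, fun hxs => hxz ?_⟩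
    rw [mem_ball, dist_eq_norm] at hxs ⊢
    have hs_eq : s = r - ‖z‖ :=
      max_eq_left (by by_contra! h; linarith [max_eq_right h.le, norm_nonneg (x - c)])
    calc ‖x + z - c‖ ≤ ‖x - c‖ + ‖z‖ := by rw [add_sub_right_comm]; exact norm_add_le _ _
      _ < r := by linarith
  calc μ {x | x ∈ ball c r ∧ x + z ∉ ball c r} ≤ μ (ball c r \ ball c s) := measure_mono h_shell
    _ = ENNReal.ofReal (r ^ finrank ℝ E - s ^ finrank ℝ E) * μ (ball 0 1) :=
      addHaar_ball_diff_ball μ c hs hsr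
    _ ≤ _ := by
      gcongr
      calc r ^ finrank ℝ E - s ^ finrank ℝ E ≤ |r ^ finrank ℝ E - s ^ finrank ℝ E| := le_abs_self _
        _ ≤ |r - s| * finrank ℝ E * max |r| |s| ^ (finrank ℝ E - 1) := abs_pow_sub_pow_le _ _ _
        _ ≤ _ := by
          rw [abs_of_nonneg (sub_nonneg.2 hsr), abs_of_nonneg hr, abs_of_nonneg hs,
            max_eq_left hsr, mul_assoc, mul_comm]
          gcongr
          linarith [le_max_left (r - ‖z‖) 0]

lemma addHaar_setOf_mem_ball_add_mem_closedBall_diff_ball_le (z : E) {r R : ℝ} (hr : 0 ≤ r) :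
    μ {x | x ∈ ball 0 r ∧ x + z ∈ closedBall 0 R \ ball 0 r} ≤
      (closedBall 0 (R + r)).indicator
        (fun z => ENNReal.ofReal (finrank ℝ E * r ^ (finrank ℝ E - 1) * ‖z‖)) z * μ (ball 0 1) := by
  by_cases hz : z ∈ closedBall 0 (R + r)
  · rw [indicator_of_mem hz]
    refine (measure_mono ?_).trans (addHaar_setOf_mem_ball_add_notMem_ball_le μ 0 z hr)
    exact fun _ hx => ⟨hx.1, hx.2.2⟩
  · suffices h_empty : {x | x ∈ ball (0 : E) r ∧ x + z ∈ closedBall 0 R \ ball 0 r} = ∅ by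
      rw [h_empty, measure_empty]
      exact zero_le
    refine eq_empty_of_forall_notMem ?_
    rintro x ⟨hx, hxz, -⟩
    apply hz
    rw [mem_closedBall_zero_iff] at hxz ⊢
    calc ‖z‖ = ‖(x + z) - x‖ := by rw [add_sub_cancel_left]
      _ ≤ ‖x + z‖ + ‖x‖ := norm_sub_le _ _
      _ ≤ R + r := add_le_add hxz (mem_ball_zero_iff.1 hx).le

lemma integrableOn_closedBall_norm_rpow {b : ℝ} (hb : -(finrank ℝ E : ℝ) < b) (ρ : ℝ) :
    IntegrableOn (fun z : E => ‖z‖ ^ b) (closedBall 0 ρ) μ := by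
  refine (locallyIntegrable_of_norm_le_rpow (C := 1) (α := -b) finrank_pos (by linarith)
    (.of_forall fun z => ?_) (measurable_norm.pow_const _).aestronglyMeasurable
    ).integrableOn_isCompact (isCompact_closedBall _ _)
  rw [Real.norm_of_nonneg (by positivity), one_mul, neg_neg]

lemma lintegral_ofReal_indicator_ball_mul_indicator_add_le (z : E) {r R a : ℝ} (hr : 0 ≤ r) :
    ∫⁻ x, ENNReal.ofReal ((ball 0 r).indicator (1 : E → ℝ) x *
      (closedBall 0 R \ ball 0 r).indicator (1 : E → ℝ) (x + z) * ‖x - (x + z)‖ ^ (-a)) ∂μ ≤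
      (closedBall 0 (R + r)).indicator (fun z => ENNReal.ofReal
        (finrank ℝ E * r ^ (finrank ℝ E - 1) * ‖z‖ ^ (-a + 1)) * μ (ball 0 1)) z := by
  set S := {x | x ∈ ball (0 : E) r ∧ x + z ∈ closedBall 0 R \ ball 0 r}
  have h_pt : ∀ x, ENNReal.ofReal ((ball 0 r).indicator (1 : E → ℝ) x *
      (closedBall 0 R \ ball 0 r).indicator (1 : E → ℝ) (x + z) * ‖x - (x + z)‖ ^ (-a)) =
      S.indicator (fun _ => ENNReal.ofReal (‖z‖ ^ (-a))) x := by
    intro x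
    by_cases hxS : x ∈ S
    · rw [indicator_of_mem hxS]
      simp [hxS.1, hxS.2]
    · rw [indicator_of_notMem hxS]
      by_cases hx : x ∈ ball (0 : E) r <;> simp_all [S]
  calc _ ≤ ENNReal.ofReal (‖z‖ ^ (-a)) * μ S := by
        simp_rw [h_pt]
        exact lintegral_indicator_const_le _ _
    _ ≤ ENNReal.ofReal (‖z‖ ^ (-a)) * ((closedBall 0 (R + r)).indicator (fun z => ENNReal.ofReal
          (finrank ℝ E * r ^ (finrank ℝ E - 1) * ‖z‖)) z * μ (ball 0 1)) := by
        gcongr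
        exact addHaar_setOf_mem_ball_add_mem_closedBall_diff_ball_le μ z hr
    _ ≤ _ := by
        by_cases hz : z ∈ closedBall 0 (R + r)
        · simp only [indicator_of_mem hz]
          rw [← mul_assoc, ← ENNReal.ofReal_mul (by positivity), mul_left_comm]
          gcongr
          exact Real.rpow_mul_self_le_rpow_add_one (norm_nonneg z) _
        · simp [indicator_of_notMem hz]

theorem integrable_indicator_ball_mul_indicator_mul_norm_sub_rpow {r R a : ℝ} (hr : 0 ≤ r)
    (ha : a < finrank ℝ E + 1) :
    Integrable (fun p : E × E => (ball 0 r).indicator (1 : E → ℝ) p.1 *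
      (closedBall 0 R \ ball 0 r).indicator (1 : E → ℝ) p.2 * ‖p.1 - p.2‖ ^ (-a)) (μ.prod μ) := by
  set f := fun p : E × E => (ball 0 r).indicator (1 : E → ℝ) p.1 *
      (closedBall 0 R \ ball 0 r).indicator (1 : E → ℝ) p.2 * ‖p.1 - p.2‖ ^ (-a)
  set k := finrank ℝ E * r ^ (finrank ℝ E - 1)
  have hf : Measurable f := by measurability
  have hf_nonneg : ∀ p, 0 ≤ f p := fun p =>
    mul_nonneg (mul_nonneg (indicator_nonneg (by simp) _) (indicator_nonneg (by simp) _))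
      (by positivity)
  refine ⟨hf.aestronglyMeasurable, (hasFiniteIntegral_iff_ofReal (.of_forall hf_nonneg)).2 ?_⟩
  calc ∫⁻ p, ENNReal.ofReal (f p) ∂(μ.prod μ)
      = ∫⁻ z, ∫⁻ x, ENNReal.ofReal (f (x, x + z)) ∂μ ∂μ :=
        lintegral_prod_eq_lintegral_lintegral_add μ hf.ennreal_ofReal
    _ ≤ ∫⁻ z in closedBall 0 (R + r), ENNReal.ofReal (k * ‖z‖ ^ (-a + 1)) * μ (ball 0 1) ∂μ := by
        rw [← lintegral_indicator measurableSet_closedBall]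
        exact lintegral_mono fun z => lintegral_ofReal_indicator_ball_mul_indicator_add_le μ z hr
    _ < ⊤ := by
        rw [lintegral_mul_const _ (by fun_prop)]
        refine ENNReal.mul_lt_top ?_ measure_ball_lt_top
        exact ((integrableOn_closedBall_norm_rpow μ (by linarith) _).const_mul k).lintegral_lt_top

theorem integrableOn_indicator_ball_mul_indicator_compl_mul_norm_sub_rpow {K : Set E}
    (hK : Bornology.IsBounded K) {r a : ℝ} (hr : 0 ≤ r) (ha : a < finrank ℝ E + 1) :
    IntegrableOn (fun p : E × E => (ball 0 r).indicator (1 : E → ℝ) p.1 *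
      (ball 0 r)ᶜ.indicator (1 : E → ℝ) p.2 * ‖p.1 - p.2‖ ^ (-a)) (K ×ˢ K) (μ.prod μ) := by
  obtain ⟨R, hKR⟩ := hK.subset_closedBall 0
  have h_int := (integrable_indicator_ball_mul_indicator_mul_norm_sub_rpow μ (R := R) hr ha
    ).integrableOn (s := univ ×ˢ closedBall 0 R)
  refine (h_int.congr_fun ?_ (MeasurableSet.univ.prod measurableSet_closedBall)).mono_set
    (prod_mono (subset_univ K) hKR)
  rintro ⟨x, y⟩ ⟨-, hy⟩
  by_cases hyB : y ∈ ball (0 : E) r <;> simp_all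

end AddHaar

theorem integral_lemma_general (K : Set ℂ) (hK : Bornology.IsBounded K)
    (r : ℝ) (hr : 0 < r) (a : ℝ) (ha : a < 3) :
    IntegrableOn
      (fun p : ℂ × ℂ =>
        (ball (0 : ℂ) r).indicator (1 : ℂ → ℝ) p.1 *
        ((ball (0 : ℂ) r)ᶜ).indicator (1 : ℂ → ℝ) p.2 *
        ‖p.1 - p.2‖ ^ (-a))
      (K ×ˢ K) volume := by
  rw [Measure.volume_eq_prod]
  refine integrableOn_indicator_ball_mul_indicator_compl_mul_norm_sub_rpow volume hK hr.le ?_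
  rw [Complex.finrank_real_complex]
  norm_num
  linarith

/-- **Integral lemma** (Lemma 3 of the paper). If `K ⊂ ℂ` is bounded and measurable,
`B = B(0,r)` with `r > 0`, and `a < 3`, then
`(x,y) ↦ 1_B(x) · 1_{ℂ∖B}(y) · |x−y|^{−a}` is Lebesgue-integrable on `K × K`. -/
theorem integral_lemma (K : Set ℂ) (hK : Bornology.IsBounded K) (hKm : MeasurableSet K)
    (r : ℝ) (hr : 0 < r) (a : ℝ) (ha : a < 3) :
    IntegrableOn
      (fun p : ℂ × ℂ =>
        (ball (0 : ℂ) r).indicator (1 : ℂ → ℝ) p.1 *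
        ((ball (0 : ℂ) r)ᶜ).indicator (1 : ℂ → ℝ) p.2 *
        ‖p.1 - p.2‖ ^ (-a))
      (K ×ˢ K) volume :=
  integral_lemma_general K hK r hr a ha
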